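/- arXiv:2210.15171 — 3 statements merged into one kernel-verified Lean document; each statement's English description precedes it below -/
import Mathlib

section
/- Let A be a Z-tensor with majorization matrix M (M_{ij} = a_{ij...j}), write A = M_tensor − N where the tensor M_tensor contains the entries a_{ij...j} and N ≥ 0 contains all mixed-index entries, and let M = P − Q with P a nonsingular M-matrix and Q ≥ 0 a matrix. Let b ≥ 0 and suppose there exists x ≥ 0 with A x^{m-1} ≥ b. Then the sequence defined by x_0 = 0 and P x_{k+1}^{[m-1]} = Q x_k^{[m-1]} + N x_k^{m-1} + b is well-defined, monotonically increasing, bounded above by every element of {x ≥ 0 : A x^{m-1} ≥ b}, and converges to the minimal nonnegative solution of A x^{m-1} = b. -/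
open Finset Filter

noncomputable section

/-- Action of an order-(p+1) tensor (p trailing indices):
`(A x^{p})_i = ∑ a_{i i₂ … i_{p+1}} x_{i₂} ⋯ x_{i_{p+1}}`. -/
def tapp (p n : ℕ) (A : Fin n → (Fin p → Fin n) → ℝ) (x : Fin n → ℝ) : Fin n → ℝ :=
  fun i => ∑ js : Fin p → Fin n, A i js * ∏ j, x (js j)

/-- A `Z`-tensor: all off-diagonal entries are nonpositive. -/
def IsZTensor (p n : ℕ) (A : Fin n → (Fin p → Fin n) → ℝ) : Prop :=
  ∀ i js, (∃ j, js j ≠ i) → A i js ≤ 0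

/-- The identity tensor. -/
def identT (p n : ℕ) : Fin n → (Fin p → Fin n) → ℝ :=
  fun i js => if ∀ j, js j = i then 1 else 0

/-- Spectral radius of a tensor: sup of moduli of (real) eigenvalues. -/
def tensorSpecRad (p n : ℕ) (B : Fin n → (Fin p → Fin n) → ℝ) : ℝ :=
  sSup {r : ℝ | ∃ lam : ℝ, ∃ x : Fin n → ℝ, x ≠ 0 ∧
    (∀ i, tapp p n B x i = lam * x i ^ p) ∧ r = |lam|}

/-- A nonsingular M-tensor: `A = s I − B` with `B ≥ 0` and `s > ρ(B)`. -/
def IsMTensor (p n : ℕ) (A : Fin n → (Fin p → Fin n) → ℝ) : Prop :=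
  ∃ s : ℝ, ∃ B : Fin n → (Fin p → Fin n) → ℝ,
    (∀ i js, 0 ≤ B i js) ∧ tensorSpecRad p n B < s ∧
    ∀ i js, A i js = s * identT p n i js - B i js

/-- The diagonal-part tensor of `A`. -/
def diagT (p n : ℕ) (A : Fin n → (Fin p → Fin n) → ℝ) : Fin n → (Fin p → Fin n) → ℝ :=
  fun i js => if ∀ j, js j = i then A i (fun _ => i) else 0

/-- The majorization matrix of `A`: `M_{ij} = a_{i j … j}`. -/
def majMatrix (p n : ℕ) (A : Fin n → (Fin p → Fin n) → ℝ) : Matrix (Fin n) (Fin n) ℝ :=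
  fun i j => A i (fun _ => j)

/-- The "mixed index" part `N = M_tensor − A`: zero on constant trailing tuples,
`−A` elsewhere. -/
def NPart (p n : ℕ) (A : Fin n → (Fin p → Fin n) → ℝ) : Fin n → (Fin p → Fin n) → ℝ :=
  fun i js => if ∀ j' j'', js j' = js j'' then 0 else -A i js

/-- A nonsingular M-matrix: a Z-matrix with `M y > 0` for some `y > 0`. -/
def IsMMatrix (n : ℕ) (P : Matrix (Fin n) (Fin n) ℝ) : Prop :=
  (∀ i j, i ≠ j → P i j ≤ 0) ∧ ∃ y : Fin n → ℝ, (∀ i, 0 < y i) ∧ ∀ i, 0 < P.mulVec y i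

/-- Spectral radius of a real matrix (via its complex spectrum). -/
def matSpecRad (n : ℕ) (J : Matrix (Fin n) (Fin n) ℝ) : ℝ :=
  sSup {r : ℝ | ∃ μ ∈ spectrum ℂ (J.map (Complex.ofReal ·)), r = ‖μ‖}

/-- Irreducibility of a matrix. -/
def MatIrreducible (n : ℕ) (J : Matrix (Fin n) (Fin n) ℝ) : Prop :=
  ∀ S : Finset (Fin n), S.Nonempty → S ≠ Finset.univ → ∃ i ∈ S, ∃ j, j ∉ S ∧ J i j ≠ 0

/-!
The iteration is a monotone fixed-point iteration `x ↦ G x` on the cone `x ≥ 0`, where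
`G v = (P⁻¹ (Q v^{[p]} + N v^{p} + b))^{[1/p]}`. Since `P⁻¹ ≥ 0`, `Q ≥ 0` and `N ≥ 0`, `G` is
monotone on the cone, and by the splitting `A = P - Q - N` a vector `z ≥ 0` satisfies
`A z^{p} ≥ b` exactly when `G z ≤ z`. Starting from `0 ≤ G 0`, the iterates increase and stay
below every such `z`; their limit is a fixed point of `G`, i.e. a solution of `A x^{p} = b`,
and it lies below every nonnegative solution.
-/

open Matrix

section MonotoneIteration

variable {α : Type*} [ConditionallyCompleteLattice α] {G : α → α} {a : α}

theorem monotone_iterate_of_monotoneOn (hG : MonotoneOn G (Set.Ici a)) (ha : a ≤ G a) :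
    Monotone fun k => G^[k] a := by
  have hstep : ∀ k, a ≤ G^[k] a ∧ G^[k] a ≤ G^[k + 1] a := by
    intro k
    induction k with
    | zero => exact ⟨le_rfl, ha⟩
    | succ k ih =>
      obtain ⟨hak, hle⟩ := ih
      have h := hG hak (hak.trans hle) hle
      rw [← Function.iterate_succ_apply' G k, ← Function.iterate_succ_apply' G (k + 1)] at h
      exact ⟨hak.trans hle, h⟩
  exact monotone_nat_of_le_succ fun k => (hstep k).2

theorem iterate_le_of_map_le (hG : MonotoneOn G (Set.Ici a)) (ha : a ≤ G a) {z : α}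
    (haz : a ≤ z) (hz : G z ≤ z) (k : ℕ) : G^[k] a ≤ z := by
  induction k with
  | zero => exact haz
  | succ k ih =>
    rw [Function.iterate_succ_apply']
    exact (hG (monotone_iterate_of_monotoneOn hG ha k.zero_le) haz ih).trans hz

theorem exists_tendsto_iterate_isLeast [TopologicalSpace α] [OrderClosedTopology α]
    [SupConvergenceClass α]
    (hG : MonotoneOn G (Set.Ici a)) (ha : a ≤ G a) (hcont : Continuous G)
    (hS : {z | a ≤ z ∧ G z ≤ z}.Nonempty) :
    ∃ x, Tendsto (fun k => G^[k] a) atTop (nhds x) ∧ IsLeast {z | a ≤ z ∧ G z ≤ z} x ∧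
      G x = x := by
  obtain ⟨z, haz, hz⟩ := hS
  have hbdd : BddAbove (Set.range fun k => G^[k] a) :=
    ⟨z, Set.forall_mem_range.2 (iterate_le_of_map_le hG ha haz hz)⟩
  set x := ⨆ k, G^[k] a
  have hlim : Tendsto (fun k => G^[k] a) atTop (nhds x) :=
    tendsto_atTop_ciSup (monotone_iterate_of_monotoneOn hG ha) hbdd
  have hfix : G x = x := by
    refine tendsto_nhds_unique ((hcont.tendsto x).comp hlim) ?_
    simpa only [Function.comp_def, ← Function.iterate_succ_apply' G] using
      hlim.comp (tendsto_add_atTop_nat 1)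
  have hax : a ≤ x := le_ciSup_of_le hbdd 0 le_rfl
  refine ⟨x, hlim, ⟨⟨hax, hfix.le⟩, fun w ⟨haw, hw⟩ => ?_⟩, hfix⟩
  exact ciSup_le (iterate_le_of_map_le hG ha haw hw)

end MonotoneIteration

theorem Matrix.mulVec_mono_of_nonneg {ι κ : Type*} [Fintype κ] {Q : Matrix ι κ ℝ}
    (hQ : ∀ i j, 0 ≤ Q i j) : Monotone (Q *ᵥ ·) := fun _ _ h i =>
  sum_le_sum fun j _ => mul_le_mul_of_nonneg_left (h j) (hQ i j)

namespace IsMMatrix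

variable {n : ℕ} {P : Matrix (Fin n) (Fin n) ℝ}

theorem nonpos_of_mulVec_nonpos (hP : IsMMatrix n P) {w : Fin n → ℝ} (hw : P *ᵥ w ≤ 0) :
    w ≤ 0 := by
  obtain ⟨hZ, y, hy, hPy⟩ := hP
  intro i
  obtain ⟨i₀, -, hmax⟩ := exists_max_image univ (fun j => w j / y j) ⟨i, mem_univ i⟩
  set t := w i₀ / y i₀
  have hwt : ∀ j, w j ≤ t * y j := fun j => (div_le_iff₀ (hy j)).1 (hmax j (mem_univ j))
  have hwt₀ : t * y i₀ = w i₀ := div_mul_cancel₀ _ (hy i₀).ne'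
  -- at a row where `w / y` is maximal, the Z-sign pattern gives `(P w)_{i₀} ≥ t (P y)_{i₀}`
  have ht : t ≤ 0 := by
    by_contra! ht
    have hrow : t * (P *ᵥ y) i₀ ≤ (P *ᵥ w) i₀ := by
      simp only [mulVec, dotProduct, mul_sum]
      refine sum_le_sum fun j _ => ?_
      rcases eq_or_ne j i₀ with rfl | hj
      · rw [mul_left_comm, hwt₀]
      · rw [mul_left_comm]
        exact mul_le_mul_of_nonpos_left (hwt j) (hZ i₀ j hj.symm)
    linarith [mul_pos ht (hPy i₀), show (P *ᵥ w) i₀ ≤ 0 from hw i₀]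
  exact (hwt i).trans (mul_nonpos_of_nonpos_of_nonneg ht (hy i).le)

theorem le_of_mulVec_le (hP : IsMMatrix n P) {u v : Fin n → ℝ} (h : P *ᵥ u ≤ P *ᵥ v) :
    u ≤ v :=
  sub_nonpos.1 <| hP.nonpos_of_mulVec_nonpos <| by rwa [mulVec_sub, sub_nonpos]

theorem isUnit_det (hP : IsMMatrix n P) : IsUnit P.det :=
  (isUnit_iff_isUnit_det P).1 <| mulVec_injective_iff_isUnit.1 fun _ _ h =>
    le_antisymm (hP.le_of_mulVec_le h.le) (hP.le_of_mulVec_le h.ge)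

theorem mulVec_inv_mulVec (hP : IsMMatrix n P) (v : Fin n → ℝ) : P *ᵥ (P⁻¹ *ᵥ v) = v := by
  rw [mulVec_mulVec, mul_nonsing_inv _ hP.isUnit_det, one_mulVec]

theorem inv_mulVec_mono (hP : IsMMatrix n P) : Monotone (P⁻¹ *ᵥ ·) := fun u v h =>
  hP.le_of_mulVec_le <| by rwa [hP.mulVec_inv_mulVec, hP.mulVec_inv_mulVec]

end IsMMatrix

section TensorAction

variable {p n : ℕ}

theorem NPart_nonneg {A : Fin n → (Fin p → Fin n) → ℝ} (hA : IsZTensor p n A) (i : Fin n)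
    (js : Fin p → Fin n) : 0 ≤ NPart p n A i js := by
  unfold NPart
  split_ifs with hconst
  · exact le_rfl
  · refine neg_nonneg.2 (hA i js ?_)
    by_contra! hdiag
    exact hconst fun j' j'' => (hdiag j').trans (hdiag j'').symm

variable {N : Fin n → (Fin p → Fin n) → ℝ}

theorem tapp_nonneg (hN : ∀ i js, 0 ≤ N i js) {x : Fin n → ℝ} (hx : 0 ≤ x) :
    0 ≤ tapp p n N x := fun i =>
  sum_nonneg fun js _ => mul_nonneg (hN i js) (prod_nonneg fun _ _ => hx _)

theorem tapp_mono (hN : ∀ i js, 0 ≤ N i js) {u v : Fin n → ℝ} (hu : 0 ≤ u) (huv : u ≤ v) :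
    tapp p n N u ≤ tapp p n N v := fun i =>
  sum_le_sum fun js _ => mul_le_mul_of_nonneg_left
    (prod_le_prod (fun _ _ => hu _) (fun _ _ => huv _)) (hN i js)

theorem continuous_tapp (N : Fin n → (Fin p → Fin n) → ℝ) : Continuous (tapp p n N) :=
  continuous_pi fun _ => continuous_finsetSum _ fun _ _ =>
    continuous_const.mul (continuous_finsetProd _ fun _ _ => continuous_apply _)

theorem tapp_eq_majMatrix_mulVec_sub_NPart (hp : p ≠ 0) (A : Fin n → (Fin p → Fin n) → ℝ)
    (x : Fin n → ℝ) :
    tapp p n A x = majMatrix p n A *ᵥ (fun j => x j ^ p) - tapp p n (NPart p n A) x := by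
  classical
  have : Nonempty (Fin p) := ⟨⟨0, Nat.pos_of_ne_zero hp⟩⟩
  have hconst : univ.filter (fun js : Fin p → Fin n => ∀ j' j'', js j' = js j'') =
      univ.map ⟨Function.const (Fin p), Function.const_injective⟩ := by
    ext js
    simp only [mem_filter, mem_univ, true_and, Finset.mem_map, Function.Embedding.coeFn_mk]
    refine ⟨fun h => ⟨js (Classical.arbitrary _), funext fun j => h _ j⟩, ?_⟩
    rintro ⟨j, rfl⟩ _ _
    rfl
  funext i
  rw [tapp, ← sum_filter_add_sum_filter_not univ (fun js => ∀ j' j'', js j' = js j''), hconst,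
    sum_map, sum_filter, Pi.sub_apply, tapp, sub_eq_add_neg, ← sum_neg_distrib]
  congr 1
  · simp only [Function.Embedding.coeFn_mk, Function.const_apply, prod_const, card_univ,
      Fintype.card_fin, mulVec, dotProduct, majMatrix]
    rfl
  · refine sum_congr rfl fun js _ => ?_
    unfold NPart
    split_ifs <;> simp_all

end TensorAction

section SplittingIteration

variable {p n : ℕ} (A : Fin n → (Fin p → Fin n) → ℝ) (P Q : Matrix (Fin n) (Fin n) ℝ)
  (b : Fin n → ℝ)

def splitRHS (v : Fin n → ℝ) : Fin n → ℝ :=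
  Q *ᵥ (fun j => v j ^ p) + tapp p n (NPart p n A) v + b

def splitStep (v : Fin n → ℝ) : Fin n → ℝ :=
  fun j => (P⁻¹ *ᵥ splitRHS A Q b v) j ^ ((p : ℝ)⁻¹)

variable {A P Q b}

theorem continuous_splitRHS : Continuous (splitRHS A Q b) :=
  ((continuous_const.matrix_mulVec (continuous_pi fun j => (continuous_apply j).pow p)).add
    (continuous_tapp _)).add continuous_const

theorem monotoneOn_splitRHS (hA : IsZTensor p n A) (hQ : ∀ i j, 0 ≤ Q i j) :
    MonotoneOn (splitRHS A Q b) (Set.Ici 0) := fun _ hu _ _ huv =>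
  add_le_add_left (add_le_add
    (mulVec_mono_of_nonneg hQ fun j => pow_le_pow_left₀ (hu j) (huv j) p)
    (tapp_mono (NPart_nonneg hA) hu huv)) b

theorem splitRHS_nonneg (hA : IsZTensor p n A) (hQ : ∀ i j, 0 ≤ Q i j) (hb : 0 ≤ b)
    {v : Fin n → ℝ} (hv : 0 ≤ v) : 0 ≤ splitRHS A Q b v := by
  have hQv : 0 ≤ Q *ᵥ (fun j => v j ^ p) := by
    simpa only [mulVec_zero] using mulVec_mono_of_nonneg hQ
      (show (0 : Fin n → ℝ) ≤ fun j => v j ^ p from fun j => pow_nonneg (hv j) p)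
  exact add_nonneg (add_nonneg hQv (tapp_nonneg (NPart_nonneg hA) hv)) hb

theorem inv_mulVec_splitRHS_nonneg (hP : IsMMatrix n P) (hA : IsZTensor p n A)
    (hQ : ∀ i j, 0 ≤ Q i j) (hb : 0 ≤ b) {v : Fin n → ℝ} (hv : 0 ≤ v) :
    0 ≤ P⁻¹ *ᵥ splitRHS A Q b v := by
  simpa only [mulVec_zero] using hP.inv_mulVec_mono (splitRHS_nonneg hA hQ hb hv)

theorem splitStep_nonneg (hP : IsMMatrix n P) (hA : IsZTensor p n A) (hQ : ∀ i j, 0 ≤ Q i j)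
    (hb : 0 ≤ b) {v : Fin n → ℝ} (hv : 0 ≤ v) : 0 ≤ splitStep A P Q b v := fun j =>
  Real.rpow_nonneg (inv_mulVec_splitRHS_nonneg hP hA hQ hb hv j) _

theorem mulVec_pow_splitStep (hp : p ≠ 0) (hP : IsMMatrix n P) (hA : IsZTensor p n A)
    (hQ : ∀ i j, 0 ≤ Q i j) (hb : 0 ≤ b) {v : Fin n → ℝ} (hv : 0 ≤ v) :
    P *ᵥ (fun j => splitStep A P Q b v j ^ p) = splitRHS A Q b v := by
  have hroot : (fun j => splitStep A P Q b v j ^ p) = P⁻¹ *ᵥ splitRHS A Q b v :=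
    funext fun j => Real.rpow_inv_natCast_pow (inv_mulVec_splitRHS_nonneg hP hA hQ hb hv j) hp
  rw [hroot, hP.mulVec_inv_mulVec]

theorem monotoneOn_splitStep (hP : IsMMatrix n P) (hA : IsZTensor p n A)
    (hQ : ∀ i j, 0 ≤ Q i j) (hb : 0 ≤ b) : MonotoneOn (splitStep A P Q b) (Set.Ici 0) :=
  fun _ hu _ hv huv j => Real.rpow_le_rpow (inv_mulVec_splitRHS_nonneg hP hA hQ hb hu j)
    (hP.inv_mulVec_mono (monotoneOn_splitRHS hA hQ hu hv huv) j) (inv_nonneg.2 p.cast_nonneg)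

theorem continuous_splitStep : Continuous (splitStep A P Q b) :=
  continuous_pi fun j => (Real.continuous_rpow_const (inv_nonneg.2 p.cast_nonneg)).comp
    ((continuous_apply j).comp (continuous_const.matrix_mulVec continuous_splitRHS))

theorem tapp_eq_mulVec_pow_sub_splitRHS (hp : p ≠ 0) (hsplit : majMatrix p n A = P - Q)
    (z : Fin n → ℝ) : tapp p n A z = P *ᵥ (fun j => z j ^ p) - splitRHS A Q b z + b := by
  rw [tapp_eq_majMatrix_mulVec_sub_NPart hp, hsplit, sub_mulVec, splitRHS]
  abel

theorem splitStep_le_of_le_tapp (hp : p ≠ 0) (hP : IsMMatrix n P) (hA : IsZTensor p n A)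
    (hQ : ∀ i j, 0 ≤ Q i j) (hb : 0 ≤ b) (hsplit : majMatrix p n A = P - Q)
    {z : Fin n → ℝ} (hz : 0 ≤ z) (hbz : b ≤ tapp p n A z) : splitStep A P Q b z ≤ z := by
  have hRz : splitRHS A Q b z ≤ P *ᵥ (fun j => z j ^ p) := fun i => by
    have hi := congrFun (tapp_eq_mulVec_pow_sub_splitRHS (b := b) hp hsplit z) i
    simp only [Pi.add_apply, Pi.sub_apply] at hi
    linarith [hbz i]
  have hsub : P⁻¹ *ᵥ splitRHS A Q b z ≤ fun j => z j ^ p :=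
    hP.le_of_mulVec_le (by rwa [hP.mulVec_inv_mulVec])
  intro j
  calc splitStep A P Q b z j
      ≤ (z j ^ p) ^ ((p : ℝ)⁻¹) := Real.rpow_le_rpow
        (inv_mulVec_splitRHS_nonneg hP hA hQ hb hz j) (hsub j) (inv_nonneg.2 p.cast_nonneg)
    _ = z j := Real.pow_rpow_inv_natCast (hz j) hp

theorem tapp_eq_of_splitStep_eq (hp : p ≠ 0) (hP : IsMMatrix n P) (hA : IsZTensor p n A)
    (hQ : ∀ i j, 0 ≤ Q i j) (hb : 0 ≤ b) (hsplit : majMatrix p n A = P - Q)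
    {x : Fin n → ℝ} (hx : 0 ≤ x) (hfix : splitStep A P Q b x = x) : tapp p n A x = b := by
  have hsol := mulVec_pow_splitStep hp hP hA hQ hb hx
  rw [hfix] at hsol
  rw [tapp_eq_mulVec_pow_sub_splitRHS hp hsplit, hsol, sub_self, zero_add]

end SplittingIteration

/-- for a Z-tensor `A` with majorization-matrix splitting `M = P − Q`
(`P` a nonsingular M-matrix, `Q ≥ 0`) and `b ≥ 0` with `S_g` nonempty, the iteration
`P x_{k+1}^{[m-1]} = Q x_k^{[m-1]} + N x_k^{m-1} + b`, `x₀ = 0`, is well-defined,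
increasing, bounded above by every element of `S_g`, and converges to the minimal
nonnegative solution. -/
theorem stmt11 (m n : ℕ) (hm : 2 ≤ m) (A : Fin n → (Fin (m-1) → Fin n) → ℝ)
    (hA : IsZTensor (m-1) n A)
    (P Q : Matrix (Fin n) (Fin n) ℝ) (hP : IsMMatrix n P) (hQ : ∀ i j, 0 ≤ Q i j)
    (hsplit : majMatrix (m-1) n A = P - Q)
    (b : Fin n → ℝ) (hb : 0 ≤ b)
    (hne : ∃ x : Fin n → ℝ, 0 ≤ x ∧ b ≤ tapp (m-1) n A x) :
    ∃ x : ℕ → Fin n → ℝ, x 0 = 0 ∧ (∀ k, 0 ≤ x k) ∧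
      (∀ k i, P.mulVec (fun j => x (k+1) j ^ (m-1)) i =
        Q.mulVec (fun j => x k j ^ (m-1)) i +
          tapp (m-1) n (NPart (m-1) n A) (x k) i + b i) ∧
      (∀ k, x k ≤ x (k+1)) ∧
      (∀ z : Fin n → ℝ, 0 ≤ z → b ≤ tapp (m-1) n A z → ∀ k, x k ≤ z) ∧
      ∃ xmin : Fin n → ℝ, Filter.Tendsto x Filter.atTop (nhds xmin) ∧
        0 ≤ xmin ∧ tapp (m-1) n A xmin = b ∧
        ∀ y : Fin n → ℝ, 0 ≤ y → tapp (m-1) n A y = b → xmin ≤ y := by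
  have hp : m - 1 ≠ 0 := by omega
  set G := splitStep A P Q b
  have hG : MonotoneOn G (Set.Ici 0) := monotoneOn_splitStep hP hA hQ hb
  have hG0 : 0 ≤ G 0 := splitStep_nonneg hP hA hQ hb le_rfl
  have hsuper : ∀ z, 0 ≤ z → b ≤ tapp (m-1) n A z → 0 ≤ z ∧ G z ≤ z := fun z hz hbz =>
    ⟨hz, splitStep_le_of_le_tapp hp hP hA hQ hb hsplit hz hbz⟩
  obtain ⟨xmin, hlim, ⟨⟨hxmin, -⟩, hleast⟩, hfix⟩ :=
    exists_tendsto_iterate_isLeast hG hG0 continuous_splitStep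
      (hne.imp fun z hz => hsuper z hz.1 hz.2)
  have hmono := monotone_iterate_of_monotoneOn hG hG0
  have hnonneg : ∀ k, 0 ≤ G^[k] 0 := fun k => hmono k.zero_le
  refine ⟨fun k => G^[k] 0, rfl, hnonneg, fun k i => ?_,
    fun k => hmono k.le_succ,
    fun z hz hbz => iterate_le_of_map_le hG hG0 hz (hsuper z hz hbz).2, xmin, hlim, hxmin,
    tapp_eq_of_splitStep_eq hp hP hA hQ hb hsplit hxmin hfix,
    fun y hy hyb => hleast (hsuper y hy hyb.ge)⟩
  show (P *ᵥ fun j => G^[k + 1] 0 j ^ (m - 1)) i = splitRHS A Q b (G^[k] 0) i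
  rw [Function.iterate_succ_apply']
  exact congrFun (mulVec_pow_splitStep hp hP hA hQ hb (hnonneg k)) i

end
end

section
/- Let P be an n×n nonsingular M-matrix, L a nonnegative mth-order n-dimensional tensor, b ≥ 0, and x̄ > 0 a vector with P x̄^{[m-1]} = L x̄^{m-1} + b. Let φ(x) = (P^{-1}(L x^{m-1} + b))^{[1/(m-1)]} and let the nonnegative matrix J = diag(x̄^{[−(m−2)]}) P^{-1} L̄ x̄^{m-2} be its Jacobian at x̄ (L̄ the semi-symmetrization of L). Then J x̄ = x̄ − diag(x̄^{[−(m−2)]}) P^{-1} b; consequently, if P^{-1} b > 0 then ρ(J) < 1. -/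
open Finset Filter

noncomputable section

/-!
Since `L̄ x^{m-2} x = L x^{m-1}`, the equation for `x̄` gives `P⁻¹ L̄ x̄^{m-2} x̄ = x̄^{[m-1]} − P⁻¹ b`,
and scaling by `diag(x̄^{[-(m-2)]})` yields the formula for `J x̄`. If `P⁻¹ b > 0`, this says
`J x̄ < x̄`; as `P⁻¹ ≥ 0` for a nonsingular M-matrix, `J` is nonnegative, and the Collatz–Wielandt
bound `ρ(J) ≤ maxᵢ (J x̄)ᵢ / x̄ᵢ < 1` concludes.
-/

namespace Matrix

variable {ι : Type*} [Fintype ι]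

lemma mul_apply_nonneg {A B : Matrix ι ι ℝ} (hA : ∀ i j, 0 ≤ A i j) (hB : ∀ i j, 0 ≤ B i j)
    (i j : ι) : 0 ≤ (A * B) i j :=
  Finset.sum_nonneg fun k _ => mul_nonneg (hA i k) (hB k j)

lemma exists_mulVec_eq_smul_of_mem_spectrum [DecidableEq ι] {K : Type*} [Field K]
    {A : Matrix ι ι K} {μ : K} (h : μ ∈ spectrum K A) : ∃ v, v ≠ 0 ∧ A *ᵥ v = μ • v := by
  rw [← spectrum_toLin', ← Module.End.hasEigenvalue_iff_mem_spectrum] at h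
  obtain ⟨v, hv⟩ := h.exists_hasEigenvector
  exact ⟨v, hv.2, by simpa using hv.apply_eq_smul⟩

lemma norm_map_ofReal_mulVec_apply_le {J : Matrix ι ι ℝ} (hJ : ∀ i j, 0 ≤ J i j)
    (w : ι → ℂ) (i : ι) :
    ‖(J.map (Complex.ofReal ·) *ᵥ w) i‖ ≤ (J *ᵥ fun k => ‖w k‖) i :=
  calc ‖∑ k, (J i k : ℂ) * w k‖
      ≤ ∑ k, ‖(J i k : ℂ) * w k‖ := norm_sum_le _ _
    _ = ∑ k, J i k * ‖w k‖ := by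
      simp only [norm_mul, Complex.norm_real, Real.norm_of_nonneg (hJ i _)]

end Matrix

open Matrix

/-- The Collatz–Wielandt bound. -/
lemma matSpecRad_le_of_mulVec_le {n : ℕ} {J : Matrix (Fin n) (Fin n) ℝ}
    (hJ : ∀ i j, 0 ≤ J i j) {v : Fin n → ℝ} (hv : ∀ i, 0 < v i) {θ : ℝ} (hθ : 0 ≤ θ)
    (hJv : ∀ i, (J *ᵥ v) i ≤ θ * v i) : matSpecRad n J ≤ θ := by
  refine Real.sSup_le ?_ hθ
  rintro r ⟨μ, hμ, rfl⟩
  obtain ⟨w, hw, hμw⟩ := exists_mulVec_eq_smul_of_mem_spectrum hμ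
  obtain ⟨k, hk⟩ := Function.ne_iff.mp hw
  obtain ⟨i, -, hi⟩ := Finset.exists_max_image univ (fun k => ‖w k‖ / v k) ⟨k, mem_univ k⟩
  set c := ‖w i‖ / v i
  have hc : 0 < c := (div_pos (norm_pos_iff.mpr hk) (hv k)).trans_le (hi k (mem_univ k))
  have hwc : ∀ k, ‖w k‖ ≤ c * v k := fun k =>
    (div_le_iff₀ (hv k)).mp (hi k (mem_univ k))
  have key : ‖μ‖ * (c * v i) ≤ θ * (c * v i) :=
    calc ‖μ‖ * (c * v i) = ‖(J.map (Complex.ofReal ·) *ᵥ w) i‖ := by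
          rw [hμw, Pi.smul_apply, smul_eq_mul, norm_mul, div_mul_cancel₀ _ (hv i).ne']
      _ ≤ (J *ᵥ fun k => ‖w k‖) i := norm_map_ofReal_mulVec_apply_le hJ w i
      _ ≤ (J *ᵥ (c • v)) i := show ∑ k, J i k * ‖w k‖ ≤ ∑ k, J i k * (c * v k) from
          Finset.sum_le_sum fun k _ => mul_le_mul_of_nonneg_left (hwc k) (hJ i k)
      _ = c * (J *ᵥ v) i := by rw [mulVec_smul, Pi.smul_apply, smul_eq_mul]
      _ ≤ θ * (c * v i) := by nlinarith [hJv i]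
  exact le_of_mul_le_mul_right key (mul_pos hc (hv i))

lemma matSpecRad_lt_one_of_mulVec_lt {n : ℕ} {J : Matrix (Fin n) (Fin n) ℝ}
    (hJ : ∀ i j, 0 ≤ J i j) {v : Fin n → ℝ} (hv : ∀ i, 0 < v i)
    (hJv : ∀ i, (J *ᵥ v) i < v i) : matSpecRad n J < 1 := by
  set θ := (insert 0 (univ.image fun i => (J *ᵥ v) i / v i)).max' (insert_nonempty _ _)
  have hθ : θ < 1 := by
    simpa [θ, Finset.max'_lt_iff, div_lt_one (hv _)] using hJv
  refine (matSpecRad_le_of_mulVec_le hJ hv ?_ fun i => ?_).trans_lt hθ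
  · exact le_max' _ _ (mem_insert_self _ _)
  · exact (div_le_iff₀ (hv i)).mp <|
      le_max' _ _ (mem_insert_of_mem (mem_image_of_mem (fun i => (J *ᵥ v) i / v i) (mem_univ i)))

lemma IsMMatrix.nonneg_of_mulVec_nonneg {n : ℕ} {P : Matrix (Fin n) (Fin n) ℝ}
    (hP : IsMMatrix n P) {x : Fin n → ℝ} (hx : ∀ i, 0 ≤ (P *ᵥ x) i) (i : Fin n) : 0 ≤ x i := by
  obtain ⟨hZ, y, hy, hPy⟩ := hP
  by_contra! hxi
  obtain ⟨i₀, -, hi₀⟩ := Finset.exists_min_image univ (fun i => x i / y i) ⟨i, mem_univ i⟩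
  set t := x i₀ / y i₀
  have ht : t < 0 := (hi₀ i (mem_univ i)).trans_lt (div_neg_of_neg_of_pos hxi (hy i))
  -- `x - t y` is nonnegative and vanishes at `i₀`, so the Z-sign pattern makes its image
  -- nonpositive there.
  set z := x - t • y
  have hz : ∀ k, 0 ≤ z k := fun k => by
    have := (div_le_div_iff₀ (hy i₀) (hy k)).mp (hi₀ k (mem_univ k))
    simp only [z, Pi.sub_apply, Pi.smul_apply, smul_eq_mul, sub_nonneg, t]
    rw [div_mul_eq_mul_div, div_le_iff₀ (hy i₀)]
    linarith
  have hz₀ : z i₀ = 0 := by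
    simp [z, t, div_mul_cancel₀ _ (hy i₀).ne']
  have hPz : (P *ᵥ z) i₀ ≤ 0 := show ∑ k, P i₀ k * z k ≤ 0 from Finset.sum_nonpos fun k _ => by
    rcases eq_or_ne k i₀ with rfl | hk
    · simp [hz₀]
    · exact mul_nonpos_of_nonpos_of_nonneg (hZ i₀ k hk.symm) (hz k)
  rw [mulVec_sub, mulVec_smul, Pi.sub_apply, Pi.smul_apply, smul_eq_mul] at hPz
  nlinarith [hx i₀, hPy i₀]

lemma IsMMatrix.nonneg_of_mul_eq_one {n : ℕ} {P Pinv : Matrix (Fin n) (Fin n) ℝ}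
    (hP : IsMMatrix n P) (h : P * Pinv = 1) (i j : Fin n) : 0 ≤ Pinv i j := by
  refine hP.nonneg_of_mulVec_nonneg (x := fun k => Pinv k j) (fun i' => ?_) i
  have : (P *ᵥ fun k => Pinv k j) i' = (P * Pinv) i' j := rfl
  rw [this, h, one_apply]
  split_ifs <;> norm_num

/-- The semi-symmetrization `L̄` of a tensor. -/
def semiSymm (p n : ℕ) (A : Fin n → (Fin p → Fin n) → ℝ) : Fin n → (Fin p → Fin n) → ℝ :=
  fun i js => (∑ σ : Equiv.Perm (Fin p), A i (js ∘ σ)) / (Nat.factorial p)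

lemma tapp_comp_perm (p n : ℕ) (A : Fin n → (Fin p → Fin n) → ℝ) (x : Fin n → ℝ)
    (σ : Equiv.Perm (Fin p)) (i : Fin n) :
    ∑ js : Fin p → Fin n, A i (js ∘ σ) * ∏ j, x (js j) = tapp p n A x i := by
  refine Fintype.sum_equiv (σ.symm.arrowCongr (Equiv.refl (Fin n))) _ _ fun js => ?_
  simp [Equiv.arrowCongr, Function.comp_def, Equiv.prod_comp σ (fun j => x (js j))]

lemma tapp_semiSymm (p n : ℕ) (A : Fin n → (Fin p → Fin n) → ℝ) (x : Fin n → ℝ) :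
    tapp p n (semiSymm p n A) x = tapp p n A x := by
  funext i
  have hfac : (p.factorial : ℝ) ≠ 0 := by positivity
  simp only [tapp, semiSymm, div_mul_eq_mul_div, ← Finset.sum_div, Finset.sum_mul]
  rw [Finset.sum_comm, div_eq_iff hfac]
  simp only [tapp_comp_perm, sum_const, card_univ, Fintype.card_perm, Fintype.card_fin,
    nsmul_eq_mul]
  rw [tapp, mul_comm]

/-- The matrix `A x^{p}` of an order-`(p+2)` tensor `A`. -/
def tappMatrix (p n : ℕ) (A : Fin n → (Fin (p+1) → Fin n) → ℝ) (x : Fin n → ℝ) :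
    Matrix (Fin n) (Fin n) ℝ :=
  fun i j => ∑ rest : Fin p → Fin n, A i (Fin.cons j rest) * ∏ r, x (rest r)

lemma tappMatrix_mulVec (p n : ℕ) (A : Fin n → (Fin (p+1) → Fin n) → ℝ) (x : Fin n → ℝ) :
    tappMatrix p n A x *ᵥ x = tapp (p+1) n A x := by
  funext i
  rw [mulVec, dotProduct, tapp,
    ← (Fin.consEquiv fun _ => Fin n).sum_comp (fun js => A i js * ∏ j, x (js j)),
    Fintype.sum_prod_type]
  refine Finset.sum_congr rfl fun j _ => ?_
  rw [tappMatrix, Finset.sum_mul]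
  refine Finset.sum_congr rfl fun rest _ => ?_
  change _ = A i (Fin.cons j rest) * ∏ k, x ((Fin.cons j rest : Fin (p+1) → Fin n) k)
  rw [Fin.prod_univ_succ]
  simp only [Fin.cons_zero, Fin.cons_succ]
  ring

lemma tappMatrix_nonneg {p n : ℕ} {A : Fin n → (Fin (p+1) → Fin n) → ℝ}
    (hA : ∀ i js, 0 ≤ A i js) {x : Fin n → ℝ} (hx : ∀ i, 0 ≤ x i) (i j : Fin n) :
    0 ≤ tappMatrix p n A x i j :=
  Finset.sum_nonneg fun _ _ => mul_nonneg (hA i _) (Finset.prod_nonneg fun _ _ => hx _)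

lemma semiSymm_nonneg {p n : ℕ} {A : Fin n → (Fin p → Fin n) → ℝ}
    (hA : ∀ i js, 0 ≤ A i js) (i : Fin n) (js : Fin p → Fin n) : 0 ≤ semiSymm p n A i js :=
  div_nonneg (Finset.sum_nonneg fun _ _ => hA i _) (Nat.cast_nonneg _)

theorem stmt14_general (q n : ℕ) (P Pinv : Matrix (Fin n) (Fin n) ℝ)
    (hP : IsMMatrix n P) (hPinv : P * Pinv = 1 ∧ Pinv * P = 1)
    (L : Fin n → (Fin (q+1) → Fin n) → ℝ) (hL : ∀ i js, 0 ≤ L i js)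
    (b : Fin n → ℝ)
    (xb : Fin n → ℝ) (hxb : ∀ i, 0 < xb i)
    (heq : ∀ i, P.mulVec (fun j => xb j ^ (q+1)) i = tapp (q+1) n L xb i + b i)
    (Lbar : Fin n → (Fin (q+1) → Fin n) → ℝ)
    (hLbar : Lbar = fun i js =>
      (∑ σ : Equiv.Perm (Fin (q+1)), L i (js ∘ σ)) / (Nat.factorial (q+1)))
    (Lmat : Matrix (Fin n) (Fin n) ℝ)
    (hLmat : Lmat = fun i j =>
      ∑ rest : Fin q → Fin n, Lbar i (Fin.cons j rest) * ∏ r, xb (rest r))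
    (J : Matrix (Fin n) (Fin n) ℝ)
    (hJ : J = Matrix.diagonal (fun i => (xb i ^ q)⁻¹) * Pinv * Lmat) :
    (J.mulVec xb = fun i => xb i - (xb i ^ q)⁻¹ * Pinv.mulVec b i) ∧
    ((∀ i, 0 < Pinv.mulVec b i) → matSpecRad n J < 1) := by
  change Lbar = semiSymm (q+1) n L at hLbar
  change Lmat = tappMatrix q n Lbar xb at hLmat
  have hLx : Lmat *ᵥ xb = P *ᵥ (fun j => xb j ^ (q+1)) - b := by
    rw [hLmat, tappMatrix_mulVec, hLbar, tapp_semiSymm]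
    funext i
    rw [Pi.sub_apply, heq, add_sub_cancel_right]
  have hJx : J *ᵥ xb = fun i => xb i - (xb i ^ q)⁻¹ * (Pinv *ᵥ b) i := by
    funext i
    rw [hJ, ← mulVec_mulVec, ← mulVec_mulVec, hLx, mulVec_sub, mulVec_mulVec, hPinv.2,
      one_mulVec, mulVec_diagonal, Pi.sub_apply, mul_sub, pow_succ,
      inv_mul_cancel_left₀ (pow_pos (hxb i) q).ne']
  refine ⟨hJx, fun hPb => matSpecRad_lt_one_of_mulVec_lt ?_ hxb fun i => ?_⟩
  · have hD : ∀ i j, 0 ≤ diagonal (fun i => (xb i ^ q)⁻¹) i j := fun i j => by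
      by_cases h : i = j <;> simp [h, (hxb j).le]
    rw [hJ]
    exact mul_apply_nonneg (mul_apply_nonneg hD (hP.nonneg_of_mul_eq_one hPinv.1))
      (hLmat ▸ tappMatrix_nonneg (hLbar ▸ semiSymm_nonneg hL) fun i => (hxb i).le)
  · rw [hJx, sub_lt_self_iff]
    exact mul_pos (inv_pos.mpr (pow_pos (hxb i) q)) (hPb i)

/-- with `P x̄^{[m-1]} = L x̄^{m-1} + b` (`m = q+2`, `P` a nonsingular
M-matrix, `L ≥ 0`, `b ≥ 0`, `x̄ > 0`), the Jacobian matrix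
`J = diag(x̄^{[-(m-2)]}) P⁻¹ L̄ x̄^{m-2}` satisfies
`J x̄ = x̄ − diag(x̄^{[-(m-2)]}) P⁻¹ b`; hence `ρ(J) < 1` whenever `P⁻¹ b > 0`. -/
theorem stmt14 (q n : ℕ) (P Pinv : Matrix (Fin n) (Fin n) ℝ)
    (hP : IsMMatrix n P) (hPinv : P * Pinv = 1 ∧ Pinv * P = 1)
    (L : Fin n → (Fin (q+1) → Fin n) → ℝ) (hL : ∀ i js, 0 ≤ L i js)
    (b : Fin n → ℝ) (hb : 0 ≤ b)
    (xb : Fin n → ℝ) (hxb : ∀ i, 0 < xb i)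
    (heq : ∀ i, P.mulVec (fun j => xb j ^ (q+1)) i = tapp (q+1) n L xb i + b i)
    (Lbar : Fin n → (Fin (q+1) → Fin n) → ℝ)
    (hLbar : Lbar = fun i js =>
      (∑ σ : Equiv.Perm (Fin (q+1)), L i (js ∘ σ)) / (Nat.factorial (q+1)))
    (Lmat : Matrix (Fin n) (Fin n) ℝ)
    (hLmat : Lmat = fun i j =>
      ∑ rest : Fin q → Fin n, Lbar i (Fin.cons j rest) * ∏ r, xb (rest r))
    (J : Matrix (Fin n) (Fin n) ℝ)
    (hJ : J = Matrix.diagonal (fun i => (xb i ^ q)⁻¹) * Pinv * Lmat) :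
    (J.mulVec xb = fun i => xb i - (xb i ^ q)⁻¹ * Pinv.mulVec b i) ∧
    ((∀ i, 0 < Pinv.mulVec b i) → matSpecRad n J < 1) :=
  stmt14_general q n P Pinv hP hPinv L hL b xb hxb heq Lbar hLbar Lmat hLmat J hJ

end
end

section
/- For the tensor A ∈ R^{[m,2]} with a_{11...1} = a_{22...2} = 1, a_{11...12} = −2, and all other entries zero, and b = (0,1)^T: the equation A x^{m-1} = b has exactly two nonnegative solutions, (0,1)^T and (2,1)^T, and the Jacobi iteration with x_0 = (3,1)^T produces x_k = (t_k, 1)^T where t_0 = 3 and t_{k+1} = (2 t_k^{m-2})^{1/(m-1)}; the sequence t_k decreases and converges to 2 linearly with rate (m−2)/(m−1). -/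
/-! The Jacobi splitting of this tensor decouples the two coordinates: the iteration is
`x₁ ↦ 1`, `x₀ ↦ (2 x₀^{m-2} x₁)^{1/(m-1)}`, and the equation itself factors as
`x₀^{m-2} (x₀ - 2 x₁) = 0`, `x₁^{m-1} = 1`. Taking logarithms linearizes the scalar iteration:
`log (t_k / 2) = r^k log (3/2)` with `r = (m-2)/(m-1)`. Hence `t_k = 2 exp (r^k log (3/2))`
decreases to `2`, and the error ratio is `(exp (r u) - 1)/(exp u - 1)` with `u = r^k log (3/2) → 0`,
a quotient of two difference quotients of derivatives `r` and `1` at `0`. -/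

open Finset Filter

noncomputable section

/-- The tensor of the last example (0-indexed): `a_{11…1} = a_{22…2} = 1`,
`a_{11…12} = −2`, zero elsewhere. -/
def A16 (m : ℕ) : Fin 2 → (Fin (m-1) → Fin 2) → ℝ := fun i js =>
  if ∀ j, js j = i then 1
  else if i = 0 ∧ js = (fun j : Fin (m-1) => if (j : ℕ) = m - 2 then (1 : Fin 2) else 0) then -2
  else 0

open Real Topology

section Tensor

variable {p n : ℕ}

lemma tapp_diagT (A : Fin n → (Fin p → Fin n) → ℝ) (x : Fin n → ℝ) (i : Fin n) :
    tapp p n (diagT p n A) x i = A i (fun _ => i) * x i ^ p := by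
  rw [tapp, Finset.sum_eq_single (fun _ => i)]
  · simp [diagT]
  · intro js _ hjs
    have : ¬ ∀ j, js j = i := fun h => hjs (funext h)
    simp [diagT, this]
  · simp

lemma tapp_diagT_sub (A : Fin n → (Fin p → Fin n) → ℝ) (x : Fin n → ℝ) (i : Fin n) :
    tapp p n (fun i js => diagT p n A i js - A i js) x i =
      A i (fun _ => i) * x i ^ p - tapp p n A x i := by
  simp only [tapp, sub_mul, Finset.sum_sub_distrib]
  rw [← tapp, tapp_diagT]

end Tensor

lemma vec2_eq_iff {α : Type*} (y : Fin 2 → α) (a b : α) : y = ![a, b] ↔ y 0 = a ∧ y 1 = b := by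
  simp [funext_iff, Fin.forall_fin_two]

section A16

variable {m : ℕ}

/-- The index tuple of the entry `a_{11…12}`, 0-indexed. -/
def mixedIndex (m : ℕ) : Fin (m-1) → Fin 2 := fun j => if (j : ℕ) = m - 2 then 1 else 0

lemma mixedIndex_ne_const (hm : 2 ≤ m) : mixedIndex m ≠ fun _ => 0 := by
  intro h
  simpa [mixedIndex] using congrFun h ⟨m - 2, by omega⟩

lemma prod_mixedIndex (hm : 2 ≤ m) (y : Fin 2 → ℝ) :
    ∏ j, y (mixedIndex m j) = y 0 ^ (m-2) * y 1 := by
  set last : Fin (m-1) := ⟨m - 2, by omega⟩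
  have hrest : ∀ j ∈ univ.erase last, y (mixedIndex m j) = y 0 := by
    intro j hj
    have : (j : ℕ) ≠ m - 2 := fun h => (Finset.mem_erase.mp hj).1 (Fin.ext h)
    simp [mixedIndex, this]
  rw [← Finset.prod_erase_mul univ _ (mem_univ last), Finset.prod_congr rfl hrest,
    Finset.prod_const, Finset.card_erase_of_mem (mem_univ last)]
  simp [last, mixedIndex, Nat.sub_sub]

lemma A16_const (i : Fin 2) : A16 m i (fun _ => i) = 1 := by
  simp [A16]

lemma tapp_A16_one (y : Fin 2 → ℝ) : tapp (m-1) 2 (A16 m) y 1 = y 1 ^ (m-1) := by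
  rw [← one_mul (y 1 ^ (m-1)), ← A16_const (m := m) 1, ← tapp_diagT]
  refine Finset.sum_congr rfl fun js _ => ?_
  by_cases h : ∀ j, js j = 1 <;> simp [A16, diagT, h]

lemma tapp_A16_zero (hm : 2 ≤ m) (y : Fin 2 → ℝ) :
    tapp (m-1) 2 (A16 m) y 0 = y 0 ^ (m-1) - 2 * (y 0 ^ (m-2) * y 1) := by
  rw [tapp, Fintype.sum_eq_add (fun _ => 0) (mixedIndex m) (mixedIndex_ne_const hm).symm]
  · have hmixed : ¬ ∀ j, mixedIndex m j = 0 := fun h => mixedIndex_ne_const hm (funext h)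
    have : A16 m 0 (mixedIndex m) = -2 := by
      simp only [A16]
      rw [if_neg hmixed, if_pos ⟨trivial, rfl⟩]
    simp [A16_const, this, prod_mixedIndex hm]
    ring
  · rintro js ⟨hconst, hmixed⟩
    have : ¬ ∀ j, js j = 0 := fun h => hconst (funext h)
    simp only [A16]
    rw [if_neg this, if_neg fun h => hmixed h.2, zero_mul]

lemma tapp_A16_eq_iff_of_nonneg (hm : 3 ≤ m) {y : Fin 2 → ℝ} (hy : 0 ≤ y) :
    tapp (m-1) 2 (A16 m) y = ![0, 1] ↔ y = ![0, 1] ∨ y = ![2, 1] := by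
  have hfactor : tapp (m-1) 2 (A16 m) y 0 = y 0 ^ (m-2) * (y 0 - 2 * y 1) := by
    rw [tapp_A16_zero (by omega), show m - 1 = m - 2 + 1 by omega, pow_succ]
    ring
  simp only [vec2_eq_iff, hfactor, tapp_A16_one,
    pow_eq_one_iff_of_nonneg (hy 1) (by omega : m - 1 ≠ 0), mul_eq_zero,
    pow_eq_zero_iff (by omega : m - 2 ≠ 0)]
  grind

lemma jacobi_step_A16 (hm : 2 ≤ m) {s : ℝ} {x' : Fin 2 → ℝ} (hx' : 0 ≤ x')
    (h : ∀ i, A16 m i (fun _ => i) * x' i ^ (m-1) =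
      tapp (m-1) 2 (fun i js => diagT (m-1) 2 (A16 m) i js - A16 m i js) ![s, 1] i + ![0, 1] i) :
    x' = ![(2 * s ^ (m-2)) ^ ((1 : ℝ)/((m : ℝ) - 1)), 1] := by
  simp only [tapp_diagT_sub, A16_const, one_mul] at h
  have h0 : x' 0 ^ (m-1) = 2 * s ^ (m-2) := by
    simpa [tapp_A16_zero hm] using h 0
  have h1 : x' 1 ^ (m-1) = 1 := by
    simpa [tapp_A16_one] using h 1
  have hcast : (m : ℝ) - 1 = ((m - 1 : ℕ) : ℝ) := by
    rw [Nat.cast_sub (by omega), Nat.cast_one]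
  rw [vec2_eq_iff, ← h0, one_div, hcast, pow_rpow_inv_natCast (hx' 0) (by omega)]
  exact ⟨rfl, (pow_eq_one_iff_of_nonneg (hx' 1) (by omega)).1 h1⟩

end A16
lemma eq_mul_exp_of_rpow_recursion {m : ℕ} (hm : 2 ≤ m) {c : ℝ} (hc : 0 < c) {t : ℕ → ℝ}
    (ht0 : 0 < t 0) (ht : ∀ k, t (k+1) = (c * t k ^ (m-2)) ^ ((1 : ℝ)/((m : ℝ) - 1))) (k : ℕ) :
    t k = c * exp ((((m : ℝ) - 2)/((m : ℝ) - 1)) ^ k * log (t 0 / c)) := by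
  have hcast1 : (m : ℝ) - 1 = ((m - 1 : ℕ) : ℝ) := by
    rw [Nat.cast_sub (by omega), Nat.cast_one]
  have hcast2 : (m : ℝ) - 2 = ((m - 2 : ℕ) : ℝ) := by
    rw [Nat.cast_sub hm, Nat.cast_ofNat]
  induction k with
  | zero => rw [pow_zero, one_mul, exp_log (div_pos ht0 hc)]; field_simp
  | succ k ih =>
    set u := (((m : ℝ) - 2)/((m : ℝ) - 1)) ^ k * log (t 0 / c)
    have hbase : c * t k ^ (m-2) = c ^ (m-1) * exp (((m - 2 : ℕ) : ℝ) * u) := by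
      rw [ih, mul_pow, exp_nat_mul, ← mul_assoc, ← pow_succ', show m - 2 + 1 = m - 1 by omega]
    rw [ht, hbase, mul_rpow (by positivity) (exp_pos _).le, one_div, hcast1,
      pow_rpow_inv_natCast hc.le (by omega), ← exp_mul, pow_succ]
    congr 2
    rw [← hcast1, ← hcast2]
    ring

lemma tendsto_exp_mul_sub_one_div_exp_sub_one (r : ℝ) :
    Tendsto (fun u => (exp (r * u) - 1) / (exp u - 1)) (𝓝[≠] 0) (𝓝 r) := by
  have hnum : Tendsto (slope (fun u => exp (r * u)) 0) (𝓝[≠] 0) (𝓝 r) := by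
    rw [← hasDerivAt_iff_tendsto_slope]
    simpa using ((hasDerivAt_id (0 : ℝ)).const_mul r).exp
  have hden : Tendsto (slope exp 0) (𝓝[≠] 0) (𝓝 1) := by
    rw [← hasDerivAt_iff_tendsto_slope]
    simpa using hasDerivAt_exp 0
  refine (div_one r ▸ hnum.div hden one_ne_zero).congr' ?_
  filter_upwards [self_mem_nhdsWithin] with u hu
  simp only [Pi.div_apply, slope_def_field, sub_zero, mul_zero, exp_zero]
  exact div_div_div_cancel_right₀ hu _ _

section GeometricExponent

variable {c r a : ℝ}

lemma mul_exp_geom_succ_lt (hc : 0 < c) (hr0 : 0 < r) (hr1 : r < 1) (ha : 0 < a) (k : ℕ) :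
    c * exp (r ^ (k+1) * a) < c * exp (r ^ k * a) := by
  have hpow : r ^ (k+1) < r ^ k := pow_lt_pow_right_of_lt_one₀ hr0 hr1 k.lt_succ_self
  gcongr

lemma tendsto_mul_exp_geom (hr : |r| < 1) :
    Tendsto (fun k => c * exp (r ^ k * a)) atTop (𝓝 c) := by
  simpa using ((tendsto_pow_atTop_nhds_zero_of_abs_lt_one hr).mul_const a).rexp.const_mul c

lemma tendsto_ratio_mul_exp_geom (hc : c ≠ 0) (hr0 : r ≠ 0) (hr : |r| < 1) (ha : a ≠ 0) :
    Tendsto (fun k => |c * exp (r ^ (k+1) * a) - c| / |c * exp (r ^ k * a) - c|) atTop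
      (𝓝 |r|) := by
  have hexp : Tendsto (fun k => r ^ k * a) atTop (𝓝[≠] 0) :=
    tendsto_nhdsWithin_of_tendsto_nhds_of_eventually_within _
      (by simpa using (tendsto_pow_atTop_nhds_zero_of_abs_lt_one hr).mul_const a)
      (Eventually.of_forall fun k => mul_ne_zero (pow_ne_zero k hr0) ha)
  refine ((tendsto_exp_mul_sub_one_div_exp_sub_one r).comp hexp).abs.congr fun k => ?_
  rw [Function.comp_apply, ← abs_div, ← mul_sub_one, ← mul_sub_one, mul_div_mul_left _ _ hc,
    pow_succ', mul_assoc]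

end GeometricExponent

/-- for `A16` and `b = (0,1)`, the nonnegative solutions are exactly
`(0,1)` and `(2,1)`; the Jacobi iterates from `x₀ = (3,1)` are `x_k = (t_k, 1)` with
`t₀ = 3`, `t_{k+1} = (2 t_k^{m-2})^{1/(m-1)}`, and `t_k` decreases to `2` linearly
with rate `(m−2)/(m−1)`. -/
theorem stmt16 (m : ℕ) (hm : 3 ≤ m)
    (x : ℕ → Fin 2 → ℝ) (hx0 : x 0 = ![3, 1]) (hxpos : ∀ k, 0 ≤ x (k+1))
    (hiter : ∀ k i, A16 m i (fun _ => i) * (x (k+1) i) ^ (m-1) =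
      tapp (m-1) 2 (fun i js => diagT (m-1) 2 (A16 m) i js - A16 m i js) (x k) i +
        (![0, 1] : Fin 2 → ℝ) i)
    (t : ℕ → ℝ) (ht0 : t 0 = 3)
    (htiter : ∀ k, t (k+1) = (2 * t k ^ (m-2)) ^ ((1 : ℝ)/((m : ℝ) - 1))) :
    (∀ y : Fin 2 → ℝ, 0 ≤ y →
      (tapp (m-1) 2 (A16 m) y = ![0, 1] ↔ y = ![0, 1] ∨ y = ![2, 1])) ∧
    (∀ k, x k = ![t k, 1]) ∧
    (∀ k, t (k+1) < t k) ∧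
    Filter.Tendsto t Filter.atTop (nhds 2) ∧
    Filter.Tendsto (fun k => |t (k+1) - 2| / |t k - 2|) Filter.atTop
      (nhds (((m : ℝ) - 2)/((m : ℝ) - 1))) := by
  have hm' : (3 : ℝ) ≤ m := by exact_mod_cast hm
  have hr0 : 0 < ((m : ℝ) - 2) / ((m : ℝ) - 1) := div_pos (by linarith) (by linarith)
  have hr1 : ((m : ℝ) - 2) / ((m : ℝ) - 1) < 1 := (div_lt_one (by linarith)).2 (by linarith)
  have hr : |((m : ℝ) - 2) / ((m : ℝ) - 1)| < 1 := abs_lt.2 ⟨by linarith, hr1⟩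
  have hlog : 0 < log (3 / 2) := log_pos (by norm_num)
  have hiterates : ∀ k, x k = ![t k, 1] := by
    intro k
    induction k with
    | zero => rw [hx0, ht0]
    | succ k ih => rw [htiter]; exact jacobi_step_A16 (by omega) (hxpos k) (ih ▸ hiter k)
  have hclosed : t = fun k => 2 * exp ((((m : ℝ) - 2) / ((m : ℝ) - 1)) ^ k * log (3 / 2)) := by
    ext k
    rw [eq_mul_exp_of_rpow_recursion (by omega) two_pos (by rw [ht0]; norm_num) htiter k, ht0]
  subst hclosed
  refine ⟨fun y hy => tapp_A16_eq_iff_of_nonneg hm hy, hiterates,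
    mul_exp_geom_succ_lt two_pos hr0 hr1 hlog, tendsto_mul_exp_geom hr, ?_⟩
  have hrate := tendsto_ratio_mul_exp_geom two_ne_zero hr0.ne' hr hlog.ne'
  rwa [abs_of_pos hr0] at hrate

end
end
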